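/- Let Γ be a group, σ : Γ × Γ → U(1) a multiplier, and T^L_γ the associated left magnetic translations on ℓ²(Γ). Let A^L(Γ,σ̄) be the double commutant (bicommutant) of the set {T^L_γ : γ ∈ Γ} inside the algebra of bounded operators on ℓ²(Γ). For a bounded operator A on ℓ²(Γ), write A_{x,y} = ⟨A δ_y, δ_x⟩ for x,y ∈ Γ. Then A ∈ A^L(Γ,σ̄) if and only if A_{xγ, yγ} = conj(σ(x,γ))·σ(y,γ)·A_{x,y} for all x, y, γ ∈ Γ. -/

import Mathlib

/-!
The right magnetic translations `(R_γ f)(x) = conj σ(xγ⁻¹, γ) f(xγ⁻¹)` are bounded and, by the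
cocycle identity, commute with every `T^L_g`; so an operator of the bicommutant commutes with each
`R_γ`, and the matrix elements of `R_γ A = A R_γ` are exactly the stated relation.

Conversely, a covariant `A` is determined by its column `a = A δ₁` through
`A_{gy,y} = conj σ(g,y) a(g)`, while an operator `B` commuting with all `T^L_g` satisfies
`B_{gx,gy} conj σ(g,y) = conj σ(g,x) B_{x,y}`. Together these make the substitution
`w = x z⁻¹ y` turn `(BA)_{x,y} = Σ_w B_{x,w} A_{w,y}` term by term into
`(AB)_{x,y} = Σ_z A_{x,z} B_{z,y}`.
-/

open scoped ENNReal

namespace lp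

section Reindex

variable {α β 𝕜 E : Type*} [NormedAddCommGroup E] {p : ℝ≥0∞}

theorem memℓp_comp_equiv_iff (e : α ≃ β) {f : β → E} : Memℓp (f ∘ e) p ↔ Memℓp f p := by
  rcases p.trichotomy with rfl | rfl | hp
  · simp only [memℓp_zero_iff]
    exact ⟨fun h => Set.Finite.of_preimage h e.surjective, fun h => h.preimage e.injective.injOn⟩
  · simp only [memℓp_infty_iff]
    exact iff_of_eq (congrArg BddAbove (e.surjective.range_comp fun i => ‖f i‖))
  · simp only [memℓp_gen_iff hp, Function.comp_apply]
    exact e.summable_iff (f := fun i => ‖f i‖ ^ p.toReal)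

variable (𝕜 E p) [NormedField 𝕜] [NormedSpace 𝕜 E] [Fact (1 ≤ p)]

noncomputable def compEquiv (e : α ≃ β) :
    lp (fun _ : β => E) p ≃ₗᵢ[𝕜] lp (fun _ : α => E) p where
  toFun f := ⟨f ∘ e, (memℓp_comp_equiv_iff e).2 f.2⟩
  invFun f := ⟨f ∘ e.symm, (memℓp_comp_equiv_iff e.symm).2 f.2⟩
  map_add' _ _ := rfl
  map_smul' _ _ := rfl
  left_inv f := by ext; simp
  right_inv f := by ext; simp
  norm_map' f := by
    rcases p.trichotomy with hp | rfl | hp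
    · exact absurd (Fact.out : 1 ≤ p) (by simp [hp])
    · simp only [LinearEquiv.coe_mk, norm_eq_ciSup]
      exact e.iSup_comp (g := fun i => ‖f i‖)
    · simp only [LinearEquiv.coe_mk, norm_eq_tsum_rpow hp]
      congr 1
      exact e.tsum_eq (fun i => ‖f i‖ ^ p.toReal)

end Reindex

section Matrix

variable {α 𝕜 F : Type*} [NormedField 𝕜] [NormedAddCommGroup F] [NormedSpace 𝕜 F]
  [DecidableEq α] {p : ℝ≥0∞} [Fact (1 ≤ p)]

theorem hasSum_smul_apply_single (hp : p ≠ ⊤) (A : lp (fun _ : α => 𝕜) p →L[𝕜] F)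
    (f : lp (fun _ : α => 𝕜) p) :
    HasSum (fun z => f z • A (lp.single p z 1)) (A f) := by
  convert A.hasSum (lp.hasSum_single hp f) using 2 with z
  rw [← map_smul, ← lp.single_smul, smul_eq_mul, mul_one]

theorem continuousLinearMap_ext_single (hp : p ≠ ⊤) {A B : lp (fun _ : α => 𝕜) p →L[𝕜] F}
    (h : ∀ z, A (lp.single p z 1) = B (lp.single p z 1)) : A = B :=
  ContinuousLinearMap.ext fun f => (hasSum_smul_apply_single hp A f).unique
    (by simpa only [h] using hasSum_smul_apply_single hp B f)

theorem hasSum_mul_apply_single (hp : p ≠ ⊤)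
    (A : lp (fun _ : α => 𝕜) p →L[𝕜] lp (fun _ : α => 𝕜) p) (f : lp (fun _ : α => 𝕜) p)
    (x : α) :
    HasSum (fun z => f z * A (lp.single p z 1) x) (A f x) :=
  hasSum_smul_apply_single hp ((evalCLM 𝕜 (fun _ : α => 𝕜) p x).comp A) f

end Matrix

end lp

namespace MagneticTranslation

open ComplexConjugate

variable {Γ : Type*} [Group Γ]

local notation "ℓ²(" Γ ")" => lp (fun _ : Γ => ℂ) 2

section Right

variable (σ : Γ → Γ → ℂ) (hσ : ∀ a b, ‖σ a b‖ = 1)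

noncomputable def right (γ : Γ) : ℓ²(Γ) →L[ℂ] ℓ²(Γ) :=
  lp.mapCLM 2 (fun x => conj (σ (x * γ⁻¹) γ) • ContinuousLinearMap.id ℂ ℂ) zero_le_one
      (fun _ => (norm_smul_le _ _).trans (by simp [hσ])) ∘L
    (lp.compEquiv ℂ ℂ 2 (Equiv.mulRight γ⁻¹)).toLinearIsometry.toContinuousLinearMap

theorem right_apply (γ : Γ) (f : ℓ²(Γ)) (x : Γ) :
    right σ hσ γ f x = conj (σ (x * γ⁻¹) γ) * f (x * γ⁻¹) := rfl

theorem right_single [DecidableEq Γ] (γ y : Γ) :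
    right σ hσ γ (lp.single 2 y 1) = conj (σ y γ) • lp.single 2 (y * γ) 1 := by
  ext x
  rw [right_apply, lp.coeFn_smul, Pi.smul_apply, smul_eq_mul]
  rcases eq_or_ne x (y * γ) with rfl | hx
  · simp
  · have hx' : x * γ⁻¹ ≠ y := fun h => hx (by rw [← h, inv_mul_cancel_right])
    simp [hx, hx']

end Right

section Left

variable {σ : Γ → Γ → ℂ} {T : Γ → ℓ²(Γ) →L[ℂ] ℓ²(Γ)}

theorem commute_left_right (hT : ∀ γ f γ', T γ f γ' = f (γ⁻¹ * γ') * conj (σ γ (γ⁻¹ * γ')))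
    (hσ : ∀ a b, ‖σ a b‖ = 1)
    (hσ_cocycle : ∀ γ₁ γ₂ γ₃, σ γ₁ γ₂ * σ (γ₁ * γ₂) γ₃ = σ γ₁ (γ₂ * γ₃) * σ γ₂ γ₃) (g γ : Γ) :
    Commute (T g) (right σ hσ γ) := by
  ext f x
  obtain ⟨u, rfl⟩ : ∃ u, x = g * u * γ := ⟨g⁻¹ * x * γ⁻¹, by group⟩
  have hcocycle := congrArg conj (hσ_cocycle g u γ)
  simp only [map_mul] at hcocycle
  simp only [mul_apply_eq_comp, hT, right_apply, mul_assoc, inv_mul_cancel_left,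
    mul_inv_cancel, mul_one]
  linear_combination -f u * hcocycle

variable [DecidableEq Γ]

theorem left_single (hT : ∀ γ f γ', T γ f γ' = f (γ⁻¹ * γ') * conj (σ γ (γ⁻¹ * γ')))
    (g y : Γ) :
    T g (lp.single 2 y 1) = conj (σ g y) • lp.single 2 (g * y) 1 := by
  ext x
  rw [hT, lp.coeFn_smul, Pi.smul_apply, smul_eq_mul]
  rcases eq_or_ne x (g * y) with rfl | hx
  · simp
  · have hx' : g⁻¹ * x ≠ y := fun h => hx (by rw [← h, mul_inv_cancel_left])
    simp [hx, hx']

theorem apply_single_mul_of_commute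
    (hT : ∀ γ f γ', T γ f γ' = f (γ⁻¹ * γ') * conj (σ γ (γ⁻¹ * γ')))
    {B : ℓ²(Γ) →L[ℂ] ℓ²(Γ)} (hB : ∀ g, Commute (T g) B) (g x y : Γ) :
    B (lp.single 2 (g * y) 1) (g * x) * conj (σ g y) = conj (σ g x) * B (lp.single 2 y 1) x := by
  have h := congrArg (fun C : ℓ²(Γ) →L[ℂ] ℓ²(Γ) => C (lp.single 2 y 1) (g * x)) (hB g).eq
  simp only [mul_apply_eq_comp, hT, inv_mul_cancel_left, left_single hT, map_smul,
    lp.coeFn_smul, Pi.smul_apply, smul_eq_mul] at h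
  linear_combination -h

end Left

section Covariant

variable [DecidableEq Γ]

def IsCovariant (σ : Γ → Γ → ℂ) (A : ℓ²(Γ) →L[ℂ] ℓ²(Γ)) : Prop :=
  ∀ x y γ : Γ, A (lp.single 2 (y * γ) 1) (x * γ) = conj (σ x γ) * σ y γ * A (lp.single 2 y 1) x

variable {σ : Γ → Γ → ℂ} {A : ℓ²(Γ) →L[ℂ] ℓ²(Γ)}

theorem isCovariant_of_commute_right (hσ : ∀ a b, ‖σ a b‖ = 1)
    (hA : ∀ γ, Commute (right σ hσ γ) A) : IsCovariant σ A := by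
  intro x y γ
  have h := congrArg (fun C : ℓ²(Γ) →L[ℂ] ℓ²(Γ) => C (lp.single 2 y 1) (x * γ)) (hA γ).eq
  simp only [mul_apply_eq_comp, right_apply, mul_inv_cancel_right, right_single, map_smul,
    lp.coeFn_smul, Pi.smul_apply, smul_eq_mul] at h
  have hunit : conj (σ y γ) * σ y γ = 1 := by simp [Complex.conj_mul', hσ]
  linear_combination -(σ y γ) * h - A (lp.single 2 (y * γ) 1) (x * γ) * hunit

theorem IsCovariant.apply_single_mul (hσ_one : ∀ γ, σ 1 γ = 1) (hA : IsCovariant σ A)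
    (g y : Γ) : A (lp.single 2 y 1) (g * y) = conj (σ g y) * A (lp.single 2 1 1) g := by
  simpa [hσ_one] using hA g 1 y

theorem IsCovariant.commute {T : Γ → ℓ²(Γ) →L[ℂ] ℓ²(Γ)}
    (hT : ∀ γ f γ', T γ f γ' = f (γ⁻¹ * γ') * conj (σ γ (γ⁻¹ * γ')))
    (hσ_one : ∀ γ, σ 1 γ = 1) (hA : IsCovariant σ A)
    {B : ℓ²(Γ) →L[ℂ] ℓ²(Γ)} (hB : ∀ g, Commute (T g) B) : Commute B A := by
  have hterm (g y z : Γ) :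
      A (lp.single 2 y 1) (g * y) * B (lp.single 2 (g * y) 1) (g * z) =
        B (lp.single 2 y 1) z * A (lp.single 2 z 1) (g * z) := by
    rw [hA.apply_single_mul hσ_one, hA.apply_single_mul hσ_one]
    linear_combination A (lp.single 2 1 1) g * apply_single_mul_of_commute hT hB g z y
  refine lp.continuousLinearMap_ext_single (by norm_num) fun y => ?_
  ext x
  simp only [mul_apply_eq_comp]
  let e : Γ ≃ Γ := (Equiv.inv Γ).trans ((Equiv.mulLeft x).trans (Equiv.mulRight y))
  refine (e.hasSum_iff.2
    (lp.hasSum_mul_apply_single (by norm_num) B (A (lp.single 2 y 1)) x)).unique ?_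
  convert lp.hasSum_mul_apply_single (by norm_num) A (B (lp.single 2 y 1)) x using 2 with z
  have h := hterm (x * z⁻¹) y z
  rwa [inv_mul_cancel_right] at h

end Covariant

end MagneticTranslation

open MagneticTranslation in
/-- Characterization of membership in the twisted group von Neumann algebra
`A^L(Γ,σ̄)` — the bicommutant of the magnetic translations `T^L_γ` on `ℓ²(Γ)` — by the
matrix elements `A_{x,y} = ⟨Aδ_y, δ_x⟩`:
`A ∈ A^L(Γ,σ̄)` iff `A_{xγ,yγ} = conj(σ(x,γ))·σ(y,γ)·A_{x,y}` for all `x, y, γ`. -/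
theorem mem_twisted_vN_iff {Γ : Type*} [Group Γ] [DecidableEq Γ]
    (σ : Γ → Γ → ℂ) (hσ_unit : ∀ a b, ‖σ a b‖ = 1)
    (hσ_one : ∀ γ, σ γ 1 = 1 ∧ σ 1 γ = 1)
    (hσ_cocycle : ∀ γ₁ γ₂ γ₃, σ γ₁ γ₂ * σ (γ₁ * γ₂) γ₃ = σ γ₁ (γ₂ * γ₃) * σ γ₂ γ₃)
    (T : Γ → (lp (fun _ : Γ => ℂ) 2 →L[ℂ] lp (fun _ : Γ => ℂ) 2))
    (hT : ∀ γ f γ', (T γ f) γ' = f (γ⁻¹ * γ') * (starRingEnd ℂ) (σ γ (γ⁻¹ * γ')))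
    (A : lp (fun _ : Γ => ℂ) 2 →L[ℂ] lp (fun _ : Γ => ℂ) 2) :
    A ∈ Set.centralizer (Set.centralizer (Set.range T)) ↔
      ∀ x y γ : Γ, (A (lp.single 2 (y * γ) 1)) (x * γ) =
        (starRingEnd ℂ) (σ x γ) * σ y γ * (A (lp.single 2 y 1)) x := by
  have mem_commutant_iff (B : lp (fun _ : Γ => ℂ) 2 →L[ℂ] lp (fun _ : Γ => ℂ) 2) :
      B ∈ Set.centralizer (Set.range T) ↔ ∀ g, Commute (T g) B := by
    simp only [Set.mem_centralizer_iff, Set.forall_mem_range]; rfl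
  change _ ↔ IsCovariant σ A
  simp only [Set.mem_centralizer_iff, mem_commutant_iff]
  constructor
  · intro hA
    exact isCovariant_of_commute_right hσ_unit fun γ =>
      hA _ fun g => commute_left_right hT hσ_unit hσ_cocycle g γ
  · intro hA B hB
    exact hA.commute hT (fun γ => (hσ_one γ).2) hB
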